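/- arXiv:1503.06172 — 2 statements merged into one kernel-verified Lean document; each statement's English description precedes it below -/
import Mathlib

section
/- For all n ≥ 1 and r ≥ 0, p^r_1(n) = ∑_{s=1}^{n} C(n,s) · p^r_1(n−s) + r^n, where p^r_1(n) := ∑_{s=0}^{n} C(n,s) · J^0_s · r^{n−s}. -/
/-- Stirling numbers of the second kind. -/
def stirling : ℕ → ℕ → ℕ
  | 0, 0 => 1
  | 0, _ + 1 => 0
  | _ + 1, 0 => 0
  | n + 1, s + 1 => (s + 1) * stirling n (s + 1) + stirling n s

/-- `J k n`: the number of barred preferential arrangements of an `n`-set with `k` bars,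
given by its closed form `∑ S(n,s)·s!·C(k+s,s)`. -/
def J (k n : ℕ) : ℕ :=
  ∑ s ∈ Finset.range (n + 1), stirling n s * s.factorial * (k + s).choose s

/-- `p k n`: barred preferential arrangements with `k` bars, one free section and
`k` restricted sections. -/
def p (k n : ℕ) : ℕ :=
  ∑ s ∈ Finset.range (n + 1), n.choose s * J 0 s * k ^ (n - s)

/-!
Work with exponential generating functions over `ℚ`, where binomial convolution becomes
multiplication. Both `S(n,k)·k!` and the coefficients of `(eˣ - 1)ᵏ` satisfy
`f_{k+1}' = (k+1)(f_{k+1} + f_k)` with the same constant terms, so the egf of the surjection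
numbers is `(eˣ - 1)ᵏ` and the Fubini numbers have egf `F = ∑ₖ (eˣ - 1)ᵏ`, i.e.
`F · (1 - (eˣ - 1)) = 1`. Since `p^r_1` is the binomial convolution of `J^0` with `rⁿ`, its egf
`P = F · R` satisfies `P = (eˣ - 1) · P + R`, which read coefficientwise is the recurrence.
-/

open PowerSeries PowerSeries.WithPiTopology Finset Nat

noncomputable def egf (a : ℕ → ℕ) : ℚ⟦X⟧ :=
  PowerSeries.mk fun n => (a n : ℚ) / n !

@[simp]
lemma coeff_egf (a : ℕ → ℕ) (n : ℕ) : coeff n (egf a) = (a n : ℚ) / n ! :=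
  coeff_mk _ _

lemma egf_injective : Function.Injective egf := by
  intro a b h
  funext n
  have := congrArg (coeff n) h
  simp only [coeff_egf] at this
  exact_mod_cast (div_left_inj' (by positivity)).mp this

lemma egf_add (a b : ℕ → ℕ) : egf (a + b) = egf a + egf b := by
  ext n
  simp [add_div]

def binomConv (a b : ℕ → ℕ) (n : ℕ) : ℕ :=
  ∑ s ∈ range (n + 1), n.choose s * a s * b (n - s)

lemma egf_binomConv (a b : ℕ → ℕ) : egf (binomConv a b) = egf a * egf b := by
  ext n
  rw [coeff_mul, Nat.sum_antidiagonal_eq_sum_range_succ_mk, coeff_egf, binomConv, Nat.cast_sum,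
    sum_div]
  refine sum_congr rfl fun s hs => ?_
  have hsn : s ≤ n := Nat.lt_succ_iff.mp (mem_range.mp hs)
  simp only [coeff_egf, Nat.cast_mul, Nat.cast_choose ℚ hsn]
  field_simp

lemma derivative_exp_sub_one_pow (k : ℕ) :
    d⁄dX ℚ ((exp ℚ - 1) ^ (k + 1)) = (k + 1 : ℚ) • ((exp ℚ - 1) ^ (k + 1) + (exp ℚ - 1) ^ k) := by
  rw [derivative_pow, map_sub, derivative_exp, derivative_one, Nat.add_sub_cancel, smul_eq_C_mul]
  simp only [cast_add, cast_one, sub_zero, map_add, map_natCast, map_one]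
  ring

lemma derivative_egf_stirling_succ (k : ℕ) :
    d⁄dX ℚ (egf fun n => stirling n (k + 1) * (k + 1)!) =
      (k + 1 : ℚ) •
        ((egf fun n => stirling n (k + 1) * (k + 1)!) + egf fun n => stirling n k * k !) := by
  ext n
  simp only [coeff_derivative, coeff_egf, map_smul, map_add, smul_eq_mul]
  show ((((k + 1) * stirling n (k + 1) + stirling n k) * (k + 1)! : ℕ) : ℚ) / (n + 1)! * (n + 1) = _
  push_cast [Nat.factorial_succ]
  field_simp

lemma egf_stirling_mul_factorial (k : ℕ) :
    (egf fun n => stirling n k * k !) = (exp ℚ - 1) ^ k := by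
  ext n
  induction n generalizing k with
  | zero =>
    rw [coeff_zero_eq_constantCoeff_apply (_ ^ k), map_pow, map_sub, constantCoeff_exp, map_one,
      sub_self]
    cases k <;> simp [stirling]
  | succ n ih =>
    cases k with
    | zero => simp [stirling]
    | succ k =>
      have h : coeff (n + 1) (egf fun n => stirling n (k + 1) * (k + 1)!) * (n + 1) =
          coeff (n + 1) ((exp ℚ - 1) ^ (k + 1)) * (n + 1) := by
        rw [← coeff_derivative, ← coeff_derivative, derivative_egf_stirling_succ,
          derivative_exp_sub_one_pow, map_smul, map_smul, map_add, map_add, ih, ih]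
      exact mul_right_cancel₀ (by positivity) h

lemma coeff_exp_sub_one_pow_of_lt {n k : ℕ} (h : n < k) : coeff n ((exp ℚ - 1) ^ k) = 0 := by
  have hX : (X : ℚ⟦X⟧) ∣ exp ℚ - 1 := X_dvd_iff.mpr (by simp)
  exact X_pow_dvd_iff.mp (pow_dvd_pow_of_dvd hX k) n h

lemma egf_J_zero : egf (J 0) = ∑' k, (exp ℚ - 1) ^ k := by
  ext n
  have hsum := summable_pow_of_constantCoeff_eq_zero (f := exp ℚ - 1) (by simp)
  rw [← ((hasSum_iff_hasSum_coeff ℚ).mp hsum.hasSum n).tsum_eq,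
    tsum_eq_sum (s := range (n + 1)) fun k hk =>
      coeff_exp_sub_one_pow_of_lt (by simpa using hk)]
  simp [J, ← egf_stirling_mul_factorial, sum_div]

lemma egf_J_zero_mul_one_sub_exp_sub_one : egf (J 0) * (1 - (exp ℚ - 1)) = 1 :=
  egf_J_zero ▸ tsum_pow_mul_one_sub_of_constantCoeff_eq_zero (by simp)

lemma egf_ite_zero_one : egf (fun n => if n = 0 then 0 else 1) = exp ℚ - 1 := by
  ext n
  cases n <;> simp [coeff_exp]

lemma binomConv_ite_zero_one_apply (a : ℕ → ℕ) (n : ℕ) :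
    binomConv (fun n => if n = 0 then 0 else 1) a n = ∑ s ∈ Icc 1 n, n.choose s * a (n - s) := by
  rw [binomConv, sum_range_succ', ← Ico_add_one_right_eq_Icc, sum_Ico_eq_sum_range]
  simp [add_comm]

lemma p_eq_binomConv_add (r : ℕ) :
    p r = binomConv (fun n => if n = 0 then 0 else 1) (p r) + (r ^ ·) := by
  apply egf_injective
  have hp : egf (p r) = egf (J 0) * egf (r ^ ·) := egf_binomConv _ _
  rw [egf_add, egf_binomConv, egf_ite_zero_one]
  linear_combination (1 - (exp ℚ - 1)) * hp + egf (r ^ ·) * egf_J_zero_mul_one_sub_exp_sub_one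

theorem stmt_15_general (n r : ℕ) :
    p r n = (∑ s ∈ Finset.Icc 1 n, n.choose s * p r (n - s)) + r ^ n := by
  rw [← binomConv_ite_zero_one_apply]
  exact congrFun (p_eq_binomConv_add r) n

theorem stmt_15 (n r : ℕ) (hn : 1 ≤ n) :
    p r n = (∑ s ∈ Finset.Icc 1 n, n.choose s * p r (n - s)) + r ^ n :=
  stmt_15_general n r
end

section
/- For all n, k ≥ 0, J^k_n = ∑ over all (k+1)-tuples (w_1,…,w_{k+1}) of natural numbers with w_1+⋯+w_{k+1} = n of the multinomial coefficient n!/(w_1!⋯w_{k+1}!) times J^0_{w_1}·J^0_{w_2}⋯J^0_{w_{k+1}}, where J^k_n = ∑_{s=0}^{n} S(n,s)·s!·C(k+s,s). -/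
/-!
`S(n,s)·s!` counts surjections from an `n`-set onto an `s`-set, and these counts satisfy the
Vandermonde-type identity `∑ᵢ C(n,i)·Surj(i,u)·Surj(n-i,t) = Surj(n,u+t)` (split a surjection
onto `u + t` points by the preimage of the first `u`). Consequently the transform
`c ↦ (n ↦ ∑ₛ Surj(n,s)·c(s))` turns ordinary convolution of coefficient sequences into binomial
convolution. By the hockey-stick identity `C(k+1+s,s) = ∑_{t ≤ s} C(k+t,t)`, the coefficients of
`J (k+1)` are the convolution of those of `J 0` and `J k`, so `J (k+1)` is the binomial
convolution of `J 0` and `J k`; induction on `k` then yields the multinomial formula.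
-/

open Finset Nat

theorem stirling_eq_stirlingSecond : stirling = stirlingSecond := by
  funext n s
  induction n generalizing s with
  | zero => cases s <;> rfl
  | succ n ih => cases s <;> simp [stirling, stirlingSecond, ih]

def surjCount (n s : ℕ) : ℕ := stirlingSecond n s * s !

theorem surjCount_eq_zero_of_lt {n s : ℕ} (h : n < s) : surjCount n s = 0 := by
  simp [surjCount, stirlingSecond_eq_zero_of_lt h]

theorem surjCount_succ (n s : ℕ) :
    surjCount (n + 1) s = s * (surjCount n s + surjCount n (s - 1)) := by
  cases s with
  | zero => simp [surjCount]
  | succ s =>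
    simp only [surjCount, stirlingSecond_succ_succ, factorial_succ, add_tsub_cancel_right]
    ring

theorem sum_antidiagonal_choose_mul_surjCount (n u t : ℕ) :
    ∑ ij ∈ antidiagonal n, n.choose ij.1 * (surjCount ij.1 u * surjCount ij.2 t) =
      surjCount n (u + t) := by
  induction n generalizing u t with
  | zero => rcases u with _ | u <;> rcases t with _ | t <;> simp [surjCount, ← add_assoc]
  | succ n ih =>
    have hsymm : ∀ ij ∈ antidiagonal n, n.choose ij.1 = n.choose ij.2 := fun ij hij =>
      choose_symm_of_eq_add (mem_antidiagonal.1 hij).symm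
    have hleft :
        ∑ ij ∈ antidiagonal n, n.choose ij.1 * (surjCount ij.1 u * surjCount (ij.2 + 1) t) =
        t * (surjCount n (u + t) + surjCount n (u + (t - 1))) := by
      rw [← ih, ← ih, mul_add, mul_sum, mul_sum, ← sum_add_distrib]
      refine sum_congr rfl fun ij _ => ?_
      rw [surjCount_succ]
      ring
    have hright :
        ∑ ij ∈ antidiagonal n, n.choose ij.2 * (surjCount (ij.1 + 1) u * surjCount ij.2 t) =
        u * (surjCount n (u + t) + surjCount n (u - 1 + t)) := by
      rw [← ih, ← ih, mul_add, mul_sum, mul_sum, ← sum_add_distrib]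
      refine sum_congr rfl fun ij hij => ?_
      rw [surjCount_succ, hsymm ij hij]
      ring
    have hu : u * surjCount n (u - 1 + t) = u * surjCount n (u + t - 1) := by
      rcases u with _ | u
      · simp
      · congr 3; omega
    have ht : t * surjCount n (u + (t - 1)) = t * surjCount n (u + t - 1) := by
      rcases t with _ | t
      · simp
      · congr 3
    have leibniz := sum_antidiagonal_choose_succ_nsmul (fun i j => surjCount i u * surjCount j t) n
    simp only [smul_eq_mul] at leibniz
    rw [leibniz, hleft, hright, surjCount_succ, mul_add t, mul_add u, hu, ht]
    ring

def surjTransform (c : ℕ → ℕ) (n : ℕ) : ℕ := ∑ s ∈ range (n + 1), surjCount n s * c s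

theorem surjTransform_eq_sum_range (c : ℕ → ℕ) {n N : ℕ} (h : n ≤ N) :
    surjTransform c n = ∑ s ∈ range (N + 1), surjCount n s * c s := by
  refine sum_subset (range_subset_range.2 (by omega)) fun s _ hs => ?_
  rw [surjCount_eq_zero_of_lt (by simpa using hs), zero_mul]

theorem sum_antidiagonal_choose_mul_surjTransform (a b : ℕ → ℕ) (n : ℕ) :
    ∑ ij ∈ antidiagonal n, n.choose ij.1 * (surjTransform a ij.1 * surjTransform b ij.2) =
      surjTransform (fun s => ∑ ij ∈ antidiagonal s, a ij.1 * b ij.2) n := by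
  calc ∑ ij ∈ antidiagonal n, n.choose ij.1 * (surjTransform a ij.1 * surjTransform b ij.2)
      = ∑ ij ∈ antidiagonal n, n.choose ij.1 * ((∑ u ∈ range (n + 1), surjCount ij.1 u * a u) *
          ∑ t ∈ range (n + 1), surjCount ij.2 t * b t) := by
        refine sum_congr rfl fun ij hij => ?_
        have hn := mem_antidiagonal.1 hij
        rw [surjTransform_eq_sum_range a (by omega : ij.1 ≤ n),
          surjTransform_eq_sum_range b (by omega : ij.2 ≤ n)]
    _ = ∑ u ∈ range (n + 1), ∑ t ∈ range (n + 1),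
          a u * b t *
            ∑ ij ∈ antidiagonal n, n.choose ij.1 * (surjCount ij.1 u * surjCount ij.2 t) := by
        simp_rw [sum_mul_sum, mul_sum]
        rw [sum_comm]
        refine sum_congr rfl fun u _ => ?_
        rw [sum_comm]
        refine sum_congr rfl fun t _ => sum_congr rfl fun ij _ => ?_
        ring
    _ = ∑ u ∈ range (n + 1), ∑ t ∈ range (n + 1 - u), a u * b t * surjCount n (u + t) := by
        refine sum_congr rfl fun u hu => ?_
        simp only [sum_antidiagonal_choose_mul_surjCount]
        refine (sum_subset (range_subset_range.2 (by omega)) fun t _ ht => ?_).symm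
        simp only [mem_range] at ht hu
        rw [surjCount_eq_zero_of_lt (by omega), mul_zero]
    _ = ∑ s ∈ range (n + 1), ∑ u ∈ range (s + 1), a u * b (s - u) * surjCount n s := by
        rw [← sum_range_diag_flip]
        refine sum_congr rfl fun s _ => sum_congr rfl fun u hu => ?_
        rw [add_tsub_cancel_of_le (by simpa [Nat.lt_succ_iff] using hu)]
    _ = surjTransform (fun s => ∑ ij ∈ antidiagonal s, a ij.1 * b ij.2) n := by
        simp only [surjTransform, Nat.sum_antidiagonal_eq_sum_range_succ_mk, mul_sum]
        refine sum_congr rfl fun s _ => sum_congr rfl fun u _ => ?_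
        ring

theorem J_eq_surjTransform (k : ℕ) : J k = surjTransform fun s => (k + s).choose s := by
  funext n
  simp only [J, surjTransform, surjCount, stirling_eq_stirlingSecond]

-- The factor `C(0 + i, i) = 1` is kept so that the right side is the convolution of the
-- coefficients of `J 0` and `J k` verbatim.
theorem choose_succ_add_eq_sum_antidiagonal (k s : ℕ) :
    (k + 1 + s).choose s =
      ∑ ij ∈ antidiagonal s, (0 + ij.1).choose ij.1 * (k + ij.2).choose ij.2 := by
  calc (k + 1 + s).choose s = (k + s + 1).choose (k + 1) := by
        rw [← choose_symm_add, add_right_comm]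
    _ = ∑ ij ∈ antidiagonal s, (k + ij.2).choose k := (sum_antidiagonal_choose_add k s).symm
    _ = _ := sum_congr rfl fun ij _ => by rw [zero_add, choose_self, one_mul, choose_symm_add]

theorem J_succ (k n : ℕ) :
    J (k + 1) n = ∑ ij ∈ antidiagonal n, n.choose ij.1 * (J 0 ij.1 * J k ij.2) := by
  simp only [J_eq_surjTransform, sum_antidiagonal_choose_mul_surjTransform,
    ← choose_succ_add_eq_sum_antidiagonal]

theorem sum_antidiagonalTuple_succ {M : Type*} [AddCommMonoid M] (k n : ℕ)
    (f : (Fin (k + 1) → ℕ) → M) :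
    ∑ w ∈ Finset.Nat.antidiagonalTuple (k + 1) n, f w =
      ∑ ij ∈ antidiagonal n, ∑ v ∈ Finset.Nat.antidiagonalTuple k ij.2, f (Fin.cons ij.1 v) := by
  -- `List.Nat.antidiagonalTuple (k + 1)` is by definition a bind over the first coordinate.
  change (Multiset.map f (List.Nat.antidiagonalTuple (k + 1) n : Multiset _)).sum =
    (Multiset.map _ (Multiset.Nat.antidiagonal n)).sum
  rw [List.Nat.antidiagonalTuple, ← Multiset.coe_bind, Multiset.map_bind, Multiset.sum_bind]
  simp only [← Multiset.map_coe, Multiset.map_map]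
  rfl

theorem multinomial_univ_fin_cons {k : ℕ} (a : ℕ) (v : Fin k → ℕ) :
    Nat.multinomial univ (Fin.cons a v : Fin (k + 1) → ℕ) =
      (a + ∑ i, v i).choose a * Nat.multinomial univ v := by
  rw [Fin.univ_succ, Nat.multinomial_cons]
  simp [Nat.multinomial]

theorem stmt_16 (n k : ℕ) :
    J k n = ∑ w ∈ Finset.Nat.antidiagonalTuple (k + 1) n,
      Nat.multinomial Finset.univ w * ∏ i : Fin (k + 1), J 0 (w i) := by
  induction k generalizing n with
  | zero => simp
  | succ k ih =>
    rw [J_succ, sum_antidiagonalTuple_succ]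
    refine sum_congr rfl fun ij hij => ?_
    rw [ih, mul_sum, mul_sum]
    refine sum_congr rfl fun v hv => ?_
    rw [multinomial_univ_fin_cons,
      Fin.prod_univ_succ fun i => J 0 ((Fin.cons ij.1 v : Fin (k + 2) → ℕ) i),
      Finset.Nat.mem_antidiagonalTuple.1 hv, mem_antidiagonal.1 hij]
    simp only [Fin.cons_zero, Fin.cons_succ]
    ring
end
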